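/- arXiv:2511.22643 — 2 statements merged into one kernel-verified Lean document; each statement's English description precedes it below -/
import Mathlib

section
/- Policy-outcome representation as weighted marginal treatment responses (Section 3.4, expected outcome under a policy): 𝔼[Y] = ∫_{(0,1)²} [ φ^{11}(v₀,v₁)·ℙ(P₀ ≥ v₀ and P₁ ≥ v₁) + φ^{10}(v₀,v₁)·ℙ(P₀ ≥ v₀ and P₁ < v₁) + φ^{01}(v₀,v₁)·ℙ(P₀ < v₀ and P₁ ≥ v₁) + φ^{00}(v₀,v₁)·ℙ(P₀ < v₀ and P₁ < v₁) ]·c(v₀,v₁) dv₀ dv₁; that is, the expected observed outcome under any policy whose propensity scores are independent of the unobservables is a weighted integral of the four marginal treatment response functions against the copula density, with weights given by the policy's joint propensity-score distribution. -/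
/-!
Writing `D = 1{V ≤ P}`, the outcome is `Y = ∑_{d,d'} m(d,d',U) 1{D₀ = d} 1{D₁ = d'}`. Since
`(P₀, P₁)` is independent of `(V₀, V₁, U)`, the expectation of each term is the average over the
law of `(P₀, P₁)` of the same expectation with the scores frozen at `(p, q)`; there it is the
integral of `m(d,d',U)` over a quadrant of `(V₀, V₁)` cut at `(p, q)`. As `V₀, V₁ ∈ (0, 1)`,
inclusion–exclusion (`1{V > p} = 1{V ≤ 1} - 1{V ≤ p}`) reduces every quadrant to a lower-left
rectangle `(0, p] × (0, q]`, where the disintegration identity replaces it by the integral of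
`φ^{dd'} c` over the same quadrant. Exchanging the two integrations (Fubini) turns the frozen
quadrant indicators into the probabilities `ℙ(P₀ ≥ v₀, P₁ ≥ v₁)`, ….
-/

open MeasureTheory ProbabilityTheory Set

section Independence

variable {Ω α β : Type*} [MeasurableSpace Ω] [MeasurableSpace α] [MeasurableSpace β]
  {μ : Measure Ω}

theorem ProbabilityTheory.IndepFun.integral_comp_eq_integral_integral [IsFiniteMeasure μ]
    {X : Ω → α} {W : Ω → β} (hXW : IndepFun X W μ) (hX : Measurable X) (hW : Measurable W)
    {F : α × β → ℝ} (hF : Measurable F) {C : ℝ} (hFC : ∀ z, |F z| ≤ C) :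
    ∫ ω, F (X ω, W ω) ∂μ = ∫ ω', ∫ ω, F (X ω', W ω) ∂μ ∂μ := by
  have hint : Integrable F ((μ.map X).prod (μ.map W)) :=
    .of_bound hF.aestronglyMeasurable C (ae_of_all _ hFC)
  calc ∫ ω, F (X ω, W ω) ∂μ = ∫ z, F z ∂(μ.map fun ω => (X ω, W ω)) :=
        (integral_map (hX.prodMk hW).aemeasurable hF.aestronglyMeasurable).symm
    _ = ∫ a, ∫ b, F (a, b) ∂(μ.map W) ∂(μ.map X) := by
        rw [hXW.map_prod_eq_prod_map_map hX.aemeasurable hW.aemeasurable, integral_prod F hint]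
    _ = ∫ ω', ∫ ω, F (X ω', W ω) ∂μ ∂μ := by
        rw [integral_map hX.aemeasurable
          hF.stronglyMeasurable.integral_prod_right'.aestronglyMeasurable]
        congr with ω'
        exact integral_map hW.aemeasurable (hF.comp measurable_prodMk_left).aestronglyMeasurable

lemma ae_mem_of_map_eq_restrict {V : Ω → α} (hV : AEMeasurable V μ) {ν : Measure α}
    {s : Set α} (hs : MeasurableSet s) (h : μ.map V = ν.restrict s) : ∀ᵐ ω ∂μ, V ω ∈ s :=
  (ae_map_iff hV hs).mp (h ▸ ae_restrict_mem hs)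

lemma ContinuousOn.integrableOn_mul_of_abs_le [TopologicalSpace α] [OpensMeasurableSpace α]
    {ν : Measure α} {f g : α → ℝ} {s : Set α} {A B : ℝ} (hf : ContinuousOn f s)
    (hg : ContinuousOn g s) (hs : MeasurableSet s) (hνs : ν s < ⊤) (hfA : ∀ x ∈ s, |f x| ≤ A)
    (hgB : ∀ x ∈ s, |g x| ≤ B) : IntegrableOn (fun x => f x * g x) s ν := by
  refine .of_bound hνs ((hf.mul hg).aestronglyMeasurable hs) (A * B)
    ((ae_restrict_iff' hs).mpr (ae_of_all _ fun x hx => ?_))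
  rw [Real.norm_eq_abs, abs_mul]
  exact mul_le_mul (hfA x hx) (hgB x hx) (abs_nonneg _) ((abs_nonneg _).trans (hfA x hx))

end Independence

namespace PolicyOutcome

/-- `treatmentIndicator d p t = 1{D = d}` for the treatment `D = 1{t ≤ p}` of a unit with
unobservable `t` facing the propensity score `p`. -/
noncomputable def treatmentIndicator (d : Bool) (p t : ℝ) : ℝ :=
  if decide (t ≤ p) = d then 1 else 0

lemma treatmentIndicator_false (p t : ℝ) :
    treatmentIndicator false p t = 1 - treatmentIndicator true p t := by
  by_cases h : t ≤ p <;> simp [treatmentIndicator, h]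

lemma treatmentIndicator_true_of_le {p t : ℝ} (h : t ≤ p) : treatmentIndicator true p t = 1 := by
  simp [treatmentIndicator, h]

lemma treatmentIndicator_true_of_lt {p t : ℝ} (h : p < t) : treatmentIndicator true p t = 0 := by
  simp [treatmentIndicator, h.not_ge]

lemma abs_treatmentIndicator_mul_le_one (d₁ d₂ : Bool) (p t q s : ℝ) :
    |treatmentIndicator d₁ p t * treatmentIndicator d₂ q s| ≤ 1 := by
  unfold treatmentIndicator; split_ifs <;> simp

lemma sum_mul_treatmentIndicator (h : Bool → Bool → ℝ) (p t q s : ℝ) :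
    h (decide (t ≤ p)) (decide (s ≤ q))
      = ∑ d : Bool × Bool,
          h d.1 d.2 * (treatmentIndicator d.1 p t * treatmentIndicator d.2 q s) := by
  by_cases ht : t ≤ p <;> by_cases hs : s ≤ q <;>
    simp [Fintype.sum_prod_type, treatmentIndicator, ht, hs]

section Measurability

variable {α : Type*} [MeasurableSpace α] {f g : α → ℝ}

lemma measurableSet_decide_le_eq (hf : Measurable f) (hg : Measurable g) (d : Bool) :
    MeasurableSet {a | decide (f a ≤ g a) = d} := by
  cases d
  · simp only [decide_eq_false_iff_not]
    exact (measurableSet_le hf hg).compl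
  · simpa only [decide_eq_true_eq] using measurableSet_le hf hg

lemma measurable_treatmentIndicator (d : Bool) (hf : Measurable f) (hg : Measurable g) :
    Measurable fun a => treatmentIndicator d (f a) (g a) :=
  Measurable.ite (measurableSet_decide_le_eq hg hf d) measurable_const measurable_const

end Measurability

section Quadrant

variable {α β : Type*} [MeasurableSpace α] [MeasurableSpace β]

noncomputable def quadrantIntegral (ρ : Measure α) (f X Z : α → ℝ) (d₁ d₂ : Bool) (p q : ℝ) : ℝ :=
  ∫ a, f a * (treatmentIndicator d₁ p (X a) * treatmentIndicator d₂ q (Z a)) ∂ρ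

lemma quadrantIntegral_true_true (ρ : Measure α) (f X Z : α → ℝ) (p q : ℝ) :
    quadrantIntegral ρ f X Z true true p q
      = ∫ a, f a * (if X a ≤ p then 1 else 0) * (if Z a ≤ q then 1 else 0) ∂ρ := by
  simp only [quadrantIntegral, treatmentIndicator, decide_eq_true_eq, mul_assoc]

variable {ρ : Measure α} {f X Z : α → ℝ}

lemma integrable_mul_treatmentIndicator (hf : Integrable f ρ) {P Q : α → ℝ} (hP : Measurable P)
    (hQ : Measurable Q) (hX : Measurable X) (hZ : Measurable Z) (d₁ d₂ : Bool) :
    Integrable (fun a => f a * (treatmentIndicator d₁ (P a) (X a)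
      * treatmentIndicator d₂ (Q a) (Z a))) ρ :=
  hf.mul_bdd ((measurable_treatmentIndicator d₁ hP hX).mul
      (measurable_treatmentIndicator d₂ hQ hZ)).aestronglyMeasurable
    (ae_of_all _ fun _ => abs_treatmentIndicator_mul_le_one ..)

lemma quadrantIntegral_false_left (hf : Integrable f ρ) (hX : Measurable X) (hZ : Measurable Z)
    (hX1 : ∀ᵐ a ∂ρ, X a ≤ 1) (d₂ : Bool) (p q : ℝ) :
    quadrantIntegral ρ f X Z false d₂ p q
      = quadrantIntegral ρ f X Z true d₂ 1 q - quadrantIntegral ρ f X Z true d₂ p q := by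
  rw [quadrantIntegral, quadrantIntegral, quadrantIntegral, ← integral_sub
    (integrable_mul_treatmentIndicator hf measurable_const measurable_const hX hZ ..)
    (integrable_mul_treatmentIndicator hf measurable_const measurable_const hX hZ ..)]
  refine integral_congr_ae ?_
  filter_upwards [hX1] with a ha
  rw [treatmentIndicator_false, treatmentIndicator_true_of_le ha]
  ring

lemma quadrantIntegral_false_right (hf : Integrable f ρ) (hX : Measurable X) (hZ : Measurable Z)
    (hZ1 : ∀ᵐ a ∂ρ, Z a ≤ 1) (d₁ : Bool) (p q : ℝ) :
    quadrantIntegral ρ f X Z d₁ false p q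
      = quadrantIntegral ρ f X Z d₁ true p 1 - quadrantIntegral ρ f X Z d₁ true p q := by
  rw [quadrantIntegral, quadrantIntegral, quadrantIntegral, ← integral_sub
    (integrable_mul_treatmentIndicator hf measurable_const measurable_const hX hZ ..)
    (integrable_mul_treatmentIndicator hf measurable_const measurable_const hX hZ ..)]
  refine integral_congr_ae ?_
  filter_upwards [hZ1] with a ha
  rw [treatmentIndicator_false, treatmentIndicator_true_of_le ha]
  ring

lemma quadrantIntegral_true_left_of_nonpos (hX0 : ∀ᵐ a ∂ρ, 0 < X a) (d₂ : Bool) {p : ℝ}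
    (hp : p ≤ 0) (q : ℝ) : quadrantIntegral ρ f X Z true d₂ p q = 0 := by
  refine integral_eq_zero_of_ae ?_
  filter_upwards [hX0] with a ha
  simp [treatmentIndicator_true_of_lt (hp.trans_lt ha)]

lemma quadrantIntegral_true_right_of_nonpos (hZ0 : ∀ᵐ a ∂ρ, 0 < Z a) (d₁ : Bool) (p : ℝ) {q : ℝ}
    (hq : q ≤ 0) : quadrantIntegral ρ f X Z d₁ true p q = 0 := by
  refine integral_eq_zero_of_ae ?_
  filter_upwards [hZ0] with a ha
  simp [treatmentIndicator_true_of_lt (hq.trans_lt ha)]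

theorem quadrantIntegral_eq_of_eq_true_true {ρ' : Measure β} {f' X' Z' : β → ℝ}
    (hf : Integrable f ρ) (hX : Measurable X) (hZ : Measurable Z)
    (hXmem : ∀ᵐ a ∂ρ, X a ∈ Ioc 0 1) (hZmem : ∀ᵐ a ∂ρ, Z a ∈ Ioc 0 1)
    (hf' : Integrable f' ρ') (hX' : Measurable X') (hZ' : Measurable Z')
    (hX'mem : ∀ᵐ b ∂ρ', X' b ∈ Ioc 0 1) (hZ'mem : ∀ᵐ b ∂ρ', Z' b ∈ Ioc 0 1)
    (h : ∀ p ∈ Ioc (0 : ℝ) 1, ∀ q ∈ Ioc (0 : ℝ) 1,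
      quadrantIntegral ρ f X Z true true p q = quadrantIntegral ρ' f' X' Z' true true p q)
    (d₁ d₂ : Bool) {p q : ℝ} (hp : p ∈ Icc (0 : ℝ) 1) (hq : q ∈ Icc (0 : ℝ) 1) :
    quadrantIntegral ρ f X Z d₁ d₂ p q = quadrantIntegral ρ' f' X' Z' d₁ d₂ p q := by
  have one_mem : (1 : ℝ) ∈ Icc (0 : ℝ) 1 := right_mem_Icc.mpr zero_le_one
  have htt : ∀ p ∈ Icc (0 : ℝ) 1, ∀ q ∈ Icc (0 : ℝ) 1,
      quadrantIntegral ρ f X Z true true p q = quadrantIntegral ρ' f' X' Z' true true p q := by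
    intro p hp q hq
    rcases hp.1.eq_or_lt with rfl | hp0
    · rw [quadrantIntegral_true_left_of_nonpos (hXmem.mono fun _ h => h.1) _ le_rfl,
        quadrantIntegral_true_left_of_nonpos (hX'mem.mono fun _ h => h.1) _ le_rfl]
    rcases hq.1.eq_or_lt with rfl | hq0
    · rw [quadrantIntegral_true_right_of_nonpos (hZmem.mono fun _ h => h.1) _ _ le_rfl,
        quadrantIntegral_true_right_of_nonpos (hZ'mem.mono fun _ h => h.1) _ _ le_rfl]
    exact h p ⟨hp0, hp.2⟩ q ⟨hq0, hq.2⟩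
  have ht : ∀ d₂, ∀ p ∈ Icc (0 : ℝ) 1, ∀ q ∈ Icc (0 : ℝ) 1,
      quadrantIntegral ρ f X Z true d₂ p q = quadrantIntegral ρ' f' X' Z' true d₂ p q := by
    rintro (_ | _) p hp q hq
    · rw [quadrantIntegral_false_right hf hX hZ (hZmem.mono fun _ h => h.2),
        quadrantIntegral_false_right hf' hX' hZ' (hZ'mem.mono fun _ h => h.2),
        htt p hp 1 one_mem, htt p hp q hq]
    · exact htt p hp q hq
  cases d₁
  · rw [quadrantIntegral_false_left hf hX hZ (hXmem.mono fun _ h => h.2),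
      quadrantIntegral_false_left hf' hX' hZ' (hX'mem.mono fun _ h => h.2),
      ht d₂ 1 one_mem q hq, ht d₂ p hp q hq]
  · exact ht d₂ p hp q hq

end Quadrant

section UnitSquare

variable {Ω : Type*} [MeasurableSpace Ω] {μ : Measure Ω}

lemma setIntegral_Ioc_prod_Ioc_eq_quadrantIntegral {g : ℝ × ℝ → ℝ}
    (hg : ∀ x ∉ Ioo (0 : ℝ) 1 ×ˢ Ioo (0 : ℝ) 1, g x = 0) (p q : ℝ) :
    ∫ x in Ioc 0 p ×ˢ Ioc 0 q, g x
      = quadrantIntegral (volume.restrict (Ioo (0 : ℝ) 1 ×ˢ Ioo (0 : ℝ) 1)) g Prod.fst Prod.snd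
          true true p q := by
  rw [quadrantIntegral, ← integral_indicator (measurableSet_Ioc.prod measurableSet_Ioc),
    ← integral_indicator (measurableSet_Ioo.prod measurableSet_Ioo)]
  congr with x
  by_cases hx : x ∈ Ioo (0 : ℝ) 1 ×ˢ Ioo (0 : ℝ) 1
  · obtain ⟨⟨h₁, h₁'⟩, ⟨h₂, h₂'⟩⟩ := hx
    by_cases hxp : x.1 ≤ p <;> by_cases hxq : x.2 ≤ q <;>
      simp [treatmentIndicator, h₁, h₁', h₂, h₂', hxp, hxq]
  · simp [indicator_apply, hx, hg x hx]

lemma measurable_measureReal_treatment [SFinite μ] {P₀ P₁ : Ω → ℝ} (hP₀ : Measurable P₀)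
    (hP₁ : Measurable P₁) (d₁ d₂ : Bool) :
    Measurable fun x : ℝ × ℝ =>
      μ.real {ω | decide (x.1 ≤ P₀ ω) = d₁ ∧ decide (x.2 ≤ P₁ ω) = d₂} :=
  (measurable_measure_prodMk_left
    ((measurableSet_decide_le_eq measurable_fst.fst (hP₀.comp measurable_snd) d₁).inter
      (measurableSet_decide_le_eq measurable_fst.snd (hP₁.comp measurable_snd) d₂))).ennreal_toReal

lemma integral_treatmentIndicator_mul {P₀ P₁ : Ω → ℝ} (hP₀ : Measurable P₀)
    (hP₁ : Measurable P₁) (d₁ d₂ : Bool) (t₀ t₁ : ℝ) :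
    ∫ ω, treatmentIndicator d₁ (P₀ ω) t₀ * treatmentIndicator d₂ (P₁ ω) t₁ ∂μ
      = μ.real {ω | decide (t₀ ≤ P₀ ω) = d₁ ∧ decide (t₁ ≤ P₁ ω) = d₂} := by
  have hs : MeasurableSet {ω | decide (t₀ ≤ P₀ ω) = d₁ ∧ decide (t₁ ≤ P₁ ω) = d₂} :=
    (measurableSet_decide_le_eq measurable_const hP₀ d₁).inter
      (measurableSet_decide_le_eq measurable_const hP₁ d₂)
  rw [← integral_indicator_one hs]
  congr with ω
  simp only [treatmentIndicator, indicator_apply, mem_ofPred_eq, Pi.one_apply]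
  split_ifs <;> simp_all

theorem quadrantIntegral_eq_of_setIntegral_Ioc_prod_Ioc {f X Z : Ω → ℝ} (hf : Integrable f μ)
    (hX : Measurable X) (hZ : Measurable Z) (hXmem : ∀ᵐ ω ∂μ, X ω ∈ Ioo 0 1)
    (hZmem : ∀ᵐ ω ∂μ, Z ω ∈ Ioo 0 1) {g : ℝ × ℝ → ℝ}
    (hg : IntegrableOn g (Ioo (0 : ℝ) 1 ×ˢ Ioo (0 : ℝ) 1))
    (hg0 : ∀ x ∉ Ioo (0 : ℝ) 1 ×ˢ Ioo (0 : ℝ) 1, g x = 0)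
    (h : ∀ p ∈ Ioc (0 : ℝ) 1, ∀ q ∈ Ioc (0 : ℝ) 1,
      ∫ ω, f ω * (if X ω ≤ p then 1 else 0) * (if Z ω ≤ q then 1 else 0) ∂μ
        = ∫ x in Ioc 0 p ×ˢ Ioc 0 q, g x)
    (d₁ d₂ : Bool) {p q : ℝ} (hp : p ∈ Icc (0 : ℝ) 1) (hq : q ∈ Icc (0 : ℝ) 1) :
    quadrantIntegral μ f X Z d₁ d₂ p q
      = quadrantIntegral (volume.restrict (Ioo (0 : ℝ) 1 ×ˢ Ioo (0 : ℝ) 1)) g Prod.fst Prod.snd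
          d₁ d₂ p q :=
  quadrantIntegral_eq_of_eq_true_true hf hX hZ (hXmem.mono fun _ h => Ioo_subset_Ioc_self h)
    (hZmem.mono fun _ h => Ioo_subset_Ioc_self h) hg measurable_fst measurable_snd
    (ae_restrict_of_forall_mem (measurableSet_Ioo.prod measurableSet_Ioo) fun _ hx =>
      Ioo_subset_Ioc_self hx.1)
    (ae_restrict_of_forall_mem (measurableSet_Ioo.prod measurableSet_Ioo) fun _ hx =>
      Ioo_subset_Ioc_self hx.2)
    (fun p hp q hq => by
      rw [quadrantIntegral_true_true, h p hp q hq,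
        setIntegral_Ioc_prod_Ioc_eq_quadrantIntegral hg0])
    d₁ d₂ hp hq

lemma integral_comp_decide_eq_sum {f : Bool → Bool → Ω → ℝ} (hf : ∀ d d', Integrable (f d d') μ)
    {P₀ P₁ V₀ V₁ : Ω → ℝ} (hP₀ : Measurable P₀) (hP₁ : Measurable P₁) (hV₀ : Measurable V₀)
    (hV₁ : Measurable V₁) :
    ∫ ω, f (decide (V₀ ω ≤ P₀ ω)) (decide (V₁ ω ≤ P₁ ω)) ω ∂μ
      = ∑ d : Bool × Bool, ∫ ω, f d.1 d.2 ω
          * (treatmentIndicator d.1 (P₀ ω) (V₀ ω) * treatmentIndicator d.2 (P₁ ω) (V₁ ω)) ∂μ := by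
  rw [← integral_finsetSum _ fun d _ =>
    integrable_mul_treatmentIndicator (hf d.1 d.2) hP₀ hP₁ hV₀ hV₁ ..]
  congr with ω
  exact sum_mul_treatmentIndicator (fun d d' => f d d' ω) ..

theorem integral_mul_treatmentIndicator_eq_of_indepFun [IsFiniteMeasure μ] {β : Type*}
    [MeasurableSpace β] {U : Ω → β} {V₀ V₁ P₀ P₁ : Ω → ℝ} (hU : Measurable U)
    (hV₀ : Measurable V₀) (hV₁ : Measurable V₁) (hP₀ : Measurable P₀) (hP₁ : Measurable P₁)
    (hP₀mem : ∀ ω, P₀ ω ∈ Icc (0 : ℝ) 1) (hP₁mem : ∀ ω, P₁ ω ∈ Icc (0 : ℝ) 1)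
    (hindep : IndepFun (fun ω => (P₀ ω, P₁ ω)) (fun ω => (V₀ ω, V₁ ω, U ω)) μ)
    {f : β → ℝ} (hf : Measurable f) {B : ℝ} (hfB : ∀ u, |f u| ≤ B)
    {ρ : Measure (ℝ × ℝ)} [SFinite ρ] {g : ℝ × ℝ → ℝ} (hg : Integrable g ρ) {d₁ d₂ : Bool}
    (h : ∀ p ∈ Icc (0 : ℝ) 1, ∀ q ∈ Icc (0 : ℝ) 1,
      quadrantIntegral μ (fun ω => f (U ω)) V₀ V₁ d₁ d₂ p q
        = quadrantIntegral ρ g Prod.fst Prod.snd d₁ d₂ p q) :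
    ∫ ω, f (U ω) * (treatmentIndicator d₁ (P₀ ω) (V₀ ω) * treatmentIndicator d₂ (P₁ ω) (V₁ ω)) ∂μ
      = ∫ x, g x * μ.real {ω | decide (x.1 ≤ P₀ ω) = d₁ ∧ decide (x.2 ≤ P₁ ω) = d₂} ∂ρ := by
  calc _ = ∫ ω', ∫ ω, f (U ω) * (treatmentIndicator d₁ (P₀ ω') (V₀ ω)
          * treatmentIndicator d₂ (P₁ ω') (V₁ ω)) ∂μ ∂μ :=
        hindep.integral_comp_eq_integral_integral (hP₀.prodMk hP₁) (hV₀.prodMk (hV₁.prodMk hU))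
          (F := fun z => f z.2.2.2 * (treatmentIndicator d₁ z.1.1 z.2.1
            * treatmentIndicator d₂ z.1.2 z.2.2.1))
          ((hf.comp measurable_snd.snd.snd).mul
            ((measurable_treatmentIndicator d₁ measurable_fst.fst measurable_snd.fst).mul
              (measurable_treatmentIndicator d₂ measurable_fst.snd measurable_snd.snd.fst)))
          fun z => by
            rw [abs_mul]
            exact (mul_le_of_le_one_right (abs_nonneg _)
              (abs_treatmentIndicator_mul_le_one ..)).trans (hfB _)
    _ = ∫ ω', ∫ x, g x * (treatmentIndicator d₁ (P₀ ω') x.1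
          * treatmentIndicator d₂ (P₁ ω') x.2) ∂ρ ∂μ :=
        integral_congr_ae (ae_of_all _ fun ω' => h _ (hP₀mem ω') _ (hP₁mem ω'))
    _ = ∫ x, ∫ ω', g x * (treatmentIndicator d₁ (P₀ ω') x.1
          * treatmentIndicator d₂ (P₁ ω') x.2) ∂μ ∂ρ := by
        refine integral_integral_swap ((hg.comp_snd μ).mul_bdd ?_
          (ae_of_all _ fun _ => abs_treatmentIndicator_mul_le_one ..))
        exact ((measurable_treatmentIndicator d₁ (hP₀.comp measurable_fst) measurable_snd.fst).mul
          (measurable_treatmentIndicator d₂ (hP₁.comp measurable_fst)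
            measurable_snd.snd)).aestronglyMeasurable
    _ = _ := by
        congr with x
        rw [integral_const_mul, integral_treatmentIndicator_mul hP₀ hP₁]

end UnitSquare

end PolicyOutcome

open PolicyOutcome in
theorem policy_outcome_representation_general
    {Ω 𝒰 : Type*} [MeasurableSpace Ω] [MeasurableSpace 𝒰]
    (μ : Measure Ω) [IsProbabilityMeasure μ]
    (U : Ω → 𝒰) (V₀ V₁ : Ω → ℝ)
    (hU : Measurable U) (hV₀ : Measurable V₀) (hV₁ : Measurable V₁)
    -- V₀, V₁ uniformly distributed on (0,1)
    (hV₀unif : Measure.map V₀ μ = volume.restrict (Set.Ioo (0:ℝ) 1))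
    (hV₁unif : Measure.map V₁ μ = volume.restrict (Set.Ioo (0:ℝ) 1))
    -- the policy's propensity scores, with values in [0,1], independent of (V₀,V₁,U)
    (P₀ P₁ : Ω → ℝ) (hP₀ : Measurable P₀) (hP₁ : Measurable P₁)
    (hP₀mem : ∀ ω, P₀ ω ∈ Set.Icc (0:ℝ) 1) (hP₁mem : ∀ ω, P₁ ω ∈ Set.Icc (0:ℝ) 1)
    (hPindep : IndepFun (fun ω => (P₀ ω, P₁ ω)) (fun ω => (V₀ ω, V₁ ω, U ω)) μ)
    -- bounded measurable outcome function (`true` codes treatment 1, `false` codes 0)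
    (m : Bool → Bool → 𝒰 → ℝ) (hm : ∀ d d', Measurable (m d d'))
    (hm_bdd : ∃ B, ∀ d d' u, |m d d' u| ≤ B)
    -- treatments and observed outcome under the policy
    (D₀ D₁ : Ω → Bool)
    (hD₀ : ∀ ω, D₀ ω = decide (V₀ ω ≤ P₀ ω)) (hD₁ : ∀ ω, D₁ ω = decide (V₁ ω ≤ P₁ ω))
    (Y : Ω → ℝ) (hY : ∀ ω, Y ω = m (D₀ ω) (D₁ ω) (U ω))
    -- the joint law of (V₀,V₁) has density c w.r.t. 2-dimensional Lebesgue measure,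
    -- concentrated on (0,1)², continuous, bounded above and away from zero there
    (c : ℝ × ℝ → ℝ) (hc_nonneg : ∀ x, 0 ≤ c x)
    (hc_supp : ∀ x : ℝ × ℝ, x ∉ Set.Ioo (0:ℝ) 1 ×ˢ Set.Ioo (0:ℝ) 1 → c x = 0)
    (hc_cont : ContinuousOn c (Set.Ioo (0:ℝ) 1 ×ˢ Set.Ioo (0:ℝ) 1))
    (hc_bdd : ∃ B, ∀ x ∈ Set.Ioo (0:ℝ) 1 ×ˢ Set.Ioo (0:ℝ) 1, c x ≤ B)
    -- continuous bounded marginal treatment response functions φ^{dd'}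
    (φ : Bool → Bool → ℝ × ℝ → ℝ)
    (hφ_cont : ∀ d d', ContinuousOn (φ d d') (Set.Ioo (0:ℝ) 1 ×ˢ Set.Ioo (0:ℝ) 1))
    (hφ_bdd : ∃ B, ∀ d d' x, |φ d d' x| ≤ B)
    (hφ_disint : ∀ d d', ∀ p ∈ Set.Ioc (0:ℝ) 1, ∀ q ∈ Set.Ioc (0:ℝ) 1,
      (∫ ω, m d d' (U ω) * (if V₀ ω ≤ p then (1:ℝ) else 0)
        * (if V₁ ω ≤ q then (1:ℝ) else 0) ∂μ)
      = ∫ x in Set.Ioc (0:ℝ) p ×ˢ Set.Ioc (0:ℝ) q, φ d d' x * c x) :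
    ∫ ω, Y ω ∂μ
      = ∫ x in Set.Ioo (0:ℝ) 1 ×ˢ Set.Ioo (0:ℝ) 1,
          (φ true true x * (μ {ω | x.1 ≤ P₀ ω ∧ x.2 ≤ P₁ ω}).toReal
            + φ true false x * (μ {ω | x.1 ≤ P₀ ω ∧ P₁ ω < x.2}).toReal
            + φ false true x * (μ {ω | P₀ ω < x.1 ∧ x.2 ≤ P₁ ω}).toReal
            + φ false false x * (μ {ω | P₀ ω < x.1 ∧ P₁ ω < x.2}).toReal) * c x := by
  obtain ⟨Bm, hBm⟩ := hm_bdd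
  obtain ⟨Bφ, hBφ⟩ := hφ_bdd
  obtain ⟨Bc, hBc⟩ := hc_bdd
  have hmU : ∀ d d', Integrable (fun ω => m d d' (U ω)) μ := fun d d' =>
    .of_bound ((hm d d').comp hU).aestronglyMeasurable Bm (ae_of_all _ fun _ => hBm ..)
  have hφc : ∀ d d', IntegrableOn (fun x => φ d d' x * c x) (Ioo 0 1 ×ˢ Ioo 0 1) := fun d d' =>
    (hφ_cont d d').integrableOn_mul_of_abs_le hc_cont (measurableSet_Ioo.prod measurableSet_Ioo)
      ((Metric.isBounded_Ioo 0 1).prod (Metric.isBounded_Ioo 0 1)).measure_lt_top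
      (fun x _ => hBφ d d' x) fun x hx => (abs_of_nonneg (hc_nonneg x)).trans_le (hBc x hx)
  have hterm : ∀ d d', ∫ ω, m d d' (U ω) * (treatmentIndicator d (P₀ ω) (V₀ ω)
        * treatmentIndicator d' (P₁ ω) (V₁ ω)) ∂μ
      = ∫ x in Ioo 0 1 ×ˢ Ioo 0 1, φ d d' x * c x
          * μ.real {ω | decide (x.1 ≤ P₀ ω) = d ∧ decide (x.2 ≤ P₁ ω) = d'} := fun d d' =>
    integral_mul_treatmentIndicator_eq_of_indepFun hU hV₀ hV₁ hP₀ hP₁ hP₀mem hP₁mem hPindep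
      (hm d d') (hBm d d') (hφc d d') fun _ hp _ hq =>
        quadrantIntegral_eq_of_setIntegral_Ioc_prod_Ioc (hmU d d') hV₀ hV₁
          (ae_mem_of_map_eq_restrict hV₀.aemeasurable measurableSet_Ioo hV₀unif)
          (ae_mem_of_map_eq_restrict hV₁.aemeasurable measurableSet_Ioo hV₁unif) (hφc d d')
          (fun x hx => by simp [hc_supp x hx]) (hφ_disint d d') d d' hp hq
  calc ∫ ω, Y ω ∂μ
      = ∑ d : Bool × Bool, ∫ ω, m d.1 d.2 (U ω) * (treatmentIndicator d.1 (P₀ ω) (V₀ ω)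
          * treatmentIndicator d.2 (P₁ ω) (V₁ ω)) ∂μ := by
        simp_rw [hY, hD₀, hD₁]
        exact integral_comp_decide_eq_sum hmU hP₀ hP₁ hV₀ hV₁
    _ = ∫ x in Ioo 0 1 ×ˢ Ioo 0 1, ∑ d : Bool × Bool, φ d.1 d.2 x * c x
          * μ.real {ω | decide (x.1 ≤ P₀ ω) = d.1 ∧ decide (x.2 ≤ P₁ ω) = d.2} := by
        rw [integral_finsetSum _ fun d _ => (hφc d.1 d.2).mul_bdd (c := 1)
          (measurable_measureReal_treatment hP₀ hP₁ d.1 d.2).aestronglyMeasurable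
          (ae_of_all _ fun _ => by simp [abs_of_nonneg measureReal_nonneg])]
        exact Finset.sum_congr rfl fun d _ => hterm d.1 d.2
    _ = _ := by
        congr with x
        simp only [Fintype.sum_prod_type, Fintype.sum_bool, decide_eq_true_eq,
          decide_eq_false_iff_not, not_le, measureReal_def]
        ring

/-- Policy-outcome representation as weighted marginal treatment responses (Section 3.4):
the expected observed outcome under a policy whose propensity scores `(P₀,P₁)` are
independent of the unobservables is a weighted integral of the four marginal treatment
response functions against the copula density, with weights given by the policy's joint
propensity-score distribution. -/
theorem policy_outcome_representation
    {Ω 𝒰 : Type*} [MeasurableSpace Ω] [MeasurableSpace 𝒰]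
    (μ : Measure Ω) [IsProbabilityMeasure μ]
    (U : Ω → 𝒰) (V₀ V₁ : Ω → ℝ)
    (hU : Measurable U) (hV₀ : Measurable V₀) (hV₁ : Measurable V₁)
    -- V₀, V₁ uniformly distributed on (0,1)
    (hV₀unif : Measure.map V₀ μ = volume.restrict (Set.Ioo (0:ℝ) 1))
    (hV₁unif : Measure.map V₁ μ = volume.restrict (Set.Ioo (0:ℝ) 1))
    -- the policy's propensity scores, with values in [0,1], independent of (V₀,V₁,U)
    (P₀ P₁ : Ω → ℝ) (hP₀ : Measurable P₀) (hP₁ : Measurable P₁)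
    (hP₀mem : ∀ ω, P₀ ω ∈ Set.Icc (0:ℝ) 1) (hP₁mem : ∀ ω, P₁ ω ∈ Set.Icc (0:ℝ) 1)
    (hPindep : IndepFun (fun ω => (P₀ ω, P₁ ω)) (fun ω => (V₀ ω, V₁ ω, U ω)) μ)
    -- bounded measurable outcome function (`true` codes treatment 1, `false` codes 0)
    (m : Bool → Bool → 𝒰 → ℝ) (hm : ∀ d d', Measurable (m d d'))
    (hm_bdd : ∃ B, ∀ d d' u, |m d d' u| ≤ B)
    -- treatments and observed outcome under the policy
    (D₀ D₁ : Ω → Bool)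
    (hD₀ : ∀ ω, D₀ ω = decide (V₀ ω ≤ P₀ ω)) (hD₁ : ∀ ω, D₁ ω = decide (V₁ ω ≤ P₁ ω))
    (Y : Ω → ℝ) (hY : ∀ ω, Y ω = m (D₀ ω) (D₁ ω) (U ω))
    -- the joint law of (V₀,V₁) has density c w.r.t. 2-dimensional Lebesgue measure,
    -- concentrated on (0,1)², continuous, bounded above and away from zero there
    (c : ℝ × ℝ → ℝ) (hc_meas : Measurable c) (hc_nonneg : ∀ x, 0 ≤ c x)
    (hc_density : Measure.map (fun ω => (V₀ ω, V₁ ω)) μ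
      = volume.withDensity fun x => ENNReal.ofReal (c x))
    (hc_supp : ∀ x : ℝ × ℝ, x ∉ Set.Ioo (0:ℝ) 1 ×ˢ Set.Ioo (0:ℝ) 1 → c x = 0)
    (hc_cont : ContinuousOn c (Set.Ioo (0:ℝ) 1 ×ˢ Set.Ioo (0:ℝ) 1))
    (hc_bdd : ∃ B, ∀ x ∈ Set.Ioo (0:ℝ) 1 ×ˢ Set.Ioo (0:ℝ) 1, c x ≤ B)
    (hc_pos : ∃ ε > (0:ℝ), ∀ x ∈ Set.Ioo (0:ℝ) 1 ×ˢ Set.Ioo (0:ℝ) 1, ε ≤ c x)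
    -- continuous bounded marginal treatment response functions φ^{dd'}
    (φ : Bool → Bool → ℝ × ℝ → ℝ)
    (hφ_cont : ∀ d d', ContinuousOn (φ d d') (Set.Ioo (0:ℝ) 1 ×ˢ Set.Ioo (0:ℝ) 1))
    (hφ_bdd : ∃ B, ∀ d d' x, |φ d d' x| ≤ B)
    (hφ_disint : ∀ d d', ∀ p ∈ Set.Ioc (0:ℝ) 1, ∀ q ∈ Set.Ioc (0:ℝ) 1,
      (∫ ω, m d d' (U ω) * (if V₀ ω ≤ p then (1:ℝ) else 0)
        * (if V₁ ω ≤ q then (1:ℝ) else 0) ∂μ)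
      = ∫ x in Set.Ioc (0:ℝ) p ×ˢ Set.Ioc (0:ℝ) q, φ d d' x * c x) :
    ∫ ω, Y ω ∂μ
      = ∫ x in Set.Ioo (0:ℝ) 1 ×ˢ Set.Ioo (0:ℝ) 1,
          (φ true true x * (μ {ω | x.1 ≤ P₀ ω ∧ x.2 ≤ P₁ ω}).toReal
            + φ true false x * (μ {ω | x.1 ≤ P₀ ω ∧ P₁ ω < x.2}).toReal
            + φ false true x * (μ {ω | P₀ ω < x.1 ∧ x.2 ≤ P₁ ω}).toReal
            + φ false false x * (μ {ω | P₀ ω < x.1 ∧ P₁ ω < x.2}).toReal) * c x :=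
  policy_outcome_representation_general μ U V₀ V₁ hU hV₀ hV₁ hV₀unif hV₁unif P₀ P₁ hP₀ hP₁ hP₀mem
    hP₁mem hPindep m hm hm_bdd D₀ D₁ hD₀ hD₁ Y hY c hc_nonneg hc_supp hc_cont hc_bdd φ hφ_cont
    hφ_bdd hφ_disint
end

section
/- Propensity-score identification with a continuous treatment (equation p_score1_cts, under Assumptions of random assignment and monotonicity): for every d ∈ ℝ, ℙ-almost surely, 𝔼[ 1{D ≤ d} | σ(Z) ] = H(Z, d); that is, the conditional distribution function of the continuous treatment given the instruments identifies the generalized inverse of the treatment function, H(z,d) being (under the strict monotonicity of v ↦ h(z,v)) the value v with h(z,v) = d, extended by the Lebesgue-measure formula. -/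
/-!
Independence makes the conditional distribution of `V` given `Z` the law of `V`, so conditioning
on `Z` amounts to freezing it: `𝔼[f(Z, V) | Z] = ∫ f(Z, v) dℙ_V(v)`. For `f` the indicator of
`{(z, v) | h z v ≤ d}` and `V` uniform on `(0,1)`, the right-hand side is `H(Z, d)`.
-/

open MeasureTheory ProbabilityTheory

namespace ProbabilityTheory

variable {α β Ω : Type*} {mα : MeasurableSpace α} {mβ : MeasurableSpace β}
  [MeasurableSpace Ω] [StandardBorelSpace Ω] [Nonempty Ω]
  {μ : Measure α} [IsFiniteMeasure μ] {X : α → β} {Y : α → Ω}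

theorem IndepFun.condDistrib_ae_eq_const (hXY : IndepFun X Y μ) (hX : AEMeasurable X μ)
    (hY : AEMeasurable Y μ) :
    condDistrib Y X μ =ᵐ[μ.map X] Kernel.const β (μ.map Y) := by
  rw [condDistrib_ae_eq_iff_measure_eq_compProd X hY, Measure.compProd_const]
  exact (indepFun_iff_map_prod_eq_prod_map_map hX hY).mp hXY

theorem IndepFun.condExp_prod_ae_eq_integral {F : Type*} [NormedAddCommGroup F]
    [NormedSpace ℝ F] [CompleteSpace F] {f : β × Ω → F}
    (hXY : IndepFun X Y μ) (hX : Measurable X) (hY : AEMeasurable Y μ)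
    (hf : StronglyMeasurable f) (hf_int : Integrable (fun a => f (X a, Y a)) μ) :
    μ[fun a => f (X a, Y a) | mβ.comap X] =ᵐ[μ] fun a => ∫ y, f (X a, y) ∂(μ.map Y) := by
  have hκ : ∀ᵐ a ∂μ, condDistrib Y X μ (X a) = μ.map Y :=
    ae_of_ae_map hX.aemeasurable (hXY.condDistrib_ae_eq_const hX.aemeasurable hY)
  filter_upwards [condExp_prod_ae_eq_integral_condDistrib hX hY hf hf_int, hκ] with a ha haκ
  rw [ha, haκ]

theorem IndepFun.condExp_indicator_prod_ae_eq_measureReal (hXY : IndepFun X Y μ)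
    (hX : Measurable X) (hY : Measurable Y) {S : Set (β × Ω)} (hS : MeasurableSet S) :
    μ[fun a => S.indicator 1 (X a, Y a) | mβ.comap X] =ᵐ[μ]
      fun a => (μ.map Y).real (Prod.mk (X a) ⁻¹' S) := by
  have hf_int : Integrable (fun a => S.indicator (1 : β × Ω → ℝ) (X a, Y a)) μ := by
    refine .of_bound ((measurable_one.indicator hS).comp (hX.prodMk hY)).aestronglyMeasurable 1
      (.of_forall fun a => ?_)
    exact norm_indicator_le_norm_self _ _ |>.trans_eq (by simp)
  filter_upwards [hXY.condExp_prod_ae_eq_integral hX hY.aemeasurable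
    (stronglyMeasurable_one.indicator hS) hf_int] with a ha
  rw [ha, ← integral_indicator_one (measurable_prodMk_left hS)]
  rfl

end ProbabilityTheory

theorem continuous_treatment_propensity_identification_general
    {Ω 𝒵 : Type*} [MeasurableSpace Ω] [MeasurableSpace 𝒵]
    (μ : Measure Ω) [IsProbabilityMeasure μ]
    (Z : Ω → 𝒵) (V : Ω → ℝ) (hZ : Measurable Z) (hV : Measurable V)
    -- V uniformly distributed on (0,1) and independent of Z
    (hVunif : Measure.map V μ = volume.restrict (Set.Ioo (0:ℝ) 1))
    (hindep : IndepFun Z V μ)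
    -- jointly measurable treatment function, strictly increasing and continuous in v
    (h : 𝒵 → ℝ → ℝ) (hh : Measurable fun p : 𝒵 × ℝ => h p.1 p.2)
    -- the continuous treatment
    (D : Ω → ℝ) (hD : ∀ ω, D ω = h (Z ω) (V ω))
    -- the generalized inverse of the treatment function, assumed jointly measurable
    (H : 𝒵 → ℝ → ℝ)
    (hHdef : ∀ z d, H z d = (volume {v ∈ Set.Ioo (0:ℝ) 1 | h z v ≤ d}).toReal) :
    ∀ d : ℝ,
      μ[fun ω => if D ω ≤ d then (1:ℝ) else 0 | MeasurableSpace.comap Z inferInstance]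
        =ᵐ[μ] fun ω => H (Z ω) d := by
  intro d
  set S : Set (𝒵 × ℝ) := {p | h p.1 p.2 ≤ d}
  have hS : MeasurableSet S := measurableSet_le hh measurable_const
  have hindicator :
      (fun ω => if D ω ≤ d then (1:ℝ) else 0) = fun ω => S.indicator 1 (Z ω, V ω) := by
    ext ω
    simp [S, Set.indicator_apply, hD]
  have hslice : ∀ z, (μ.map V).real (Prod.mk z ⁻¹' S) = H z d := fun z => by
    rw [hHdef, hVunif, measureReal_restrict_apply (measurable_prodMk_left hS), Set.inter_comm]
    rfl
  rw [hindicator]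
  simpa only [hslice] using hindep.condExp_indicator_prod_ae_eq_measureReal hZ hV hS

/-- Propensity-score identification with a continuous treatment (equation p_score1_cts):
for every `d ∈ ℝ`, ℙ-a.s. `𝔼[ 1{D ≤ d} | σ(Z) ] = H (Z ·) d`, where
`H z d` is the Lebesgue measure of `{v ∈ (0,1) | h z v ≤ d}`. -/
theorem continuous_treatment_propensity_identification
    {Ω 𝒵 : Type*} [MeasurableSpace Ω] [MeasurableSpace 𝒵]
    (μ : Measure Ω) [IsProbabilityMeasure μ]
    (Z : Ω → 𝒵) (V : Ω → ℝ) (hZ : Measurable Z) (hV : Measurable V)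
    -- V uniformly distributed on (0,1) and independent of Z
    (hVunif : Measure.map V μ = volume.restrict (Set.Ioo (0:ℝ) 1))
    (hindep : IndepFun Z V μ)
    -- jointly measurable treatment function, strictly increasing and continuous in v
    (h : 𝒵 → ℝ → ℝ) (hh : Measurable fun p : 𝒵 × ℝ => h p.1 p.2)
    (hmono : ∀ z, StrictMonoOn (h z) (Set.Ioo (0:ℝ) 1))
    (hcont : ∀ z, ContinuousOn (h z) (Set.Ioo (0:ℝ) 1))
    -- the continuous treatment
    (D : Ω → ℝ) (hD : ∀ ω, D ω = h (Z ω) (V ω))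
    -- the generalized inverse of the treatment function, assumed jointly measurable
    (H : 𝒵 → ℝ → ℝ)
    (hHdef : ∀ z d, H z d = (volume {v ∈ Set.Ioo (0:ℝ) 1 | h z v ≤ d}).toReal)
    (hHmeas : Measurable fun p : 𝒵 × ℝ => H p.1 p.2) :
    ∀ d : ℝ,
      μ[fun ω => if D ω ≤ d then (1:ℝ) else 0 | MeasurableSpace.comap Z inferInstance]
        =ᵐ[μ] fun ω => H (Z ω) d :=
  continuous_treatment_propensity_identification_general μ Z V hZ hV hVunif hindep h hh D hD H hHdef
end
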